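/- arXiv:1802.03716 — 2 statements merged into one kernel-verified Lean document; each statement's English description precedes it below -/
import Mathlib

section
/- The announcement reduction axioms for • and ∇ are valid: for every Kripke model M = (S,R,V), every world s, and all formulas φ, ψ of the language L(∇,•,[·]) with public announcements, (1) M,s ⊨ [ψ]•φ if and only if M,s ⊨ ψ → •[ψ]φ; and (2) M,s ⊨ [ψ]∇φ if and only if M,s ⊨ ψ → (∇[ψ]φ ∧ ∇[ψ]¬φ). -/
inductive Form : Type
  | atom : Nat → Form
  | neg : Form → Form
  | and : Form → Form → Form
  | nabla : Form → Form
  | bull : Form → Form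
  | ann : Form → Form → Form

namespace Form
def imp (φ ψ : Form) : Form := neg (and φ (neg ψ))
end Form

structure Model (W : Type) where
  R : W → W → Prop
  V : Nat → W → Prop

/-- Satisfaction relativized to a domain `D` of surviving worlds: `sat M D s φ`
is truth of `φ` at `s` in the submodel of `M` restricted to `D`.
Announcement `[ψ]φ` further restricts the domain to the `ψ`-worlds. -/
def sat {W : Type} (M : Model W) : (W → Prop) → W → Form → Prop
  | _, s, .atom n => M.V n s
  | D, s, .neg φ => ¬ sat M D s φ
  | D, s, .and φ ψ => sat M D s φ ∧ sat M D s ψ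
  | D, s, .nabla φ => ∃ t u, D t ∧ D u ∧ M.R s t ∧ M.R s u ∧ sat M D t φ ∧ ¬ sat M D u φ
  | D, s, .bull φ => sat M D s φ ∧ ∃ t, D t ∧ M.R s t ∧ ¬ sat M D t φ
  | D, s, .ann ψ φ => sat M D s ψ → sat M (fun w => D w ∧ sat M D w ψ) s φ

/-- Truth at a world of the full model. -/
def Sat {W : Type} (M : Model W) (s : W) (φ : Form) : Prop :=
  sat M (fun _ => True) s φ

theorem stmt18 (W : Type) [Nonempty W] (M : Model W) (s : W) (φ ψ : Form) :
    (Sat M s (.ann ψ (.bull φ)) ↔ Sat M s (Form.imp ψ (.bull (.ann ψ φ)))) ∧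
    (Sat M s (.ann ψ (.nabla φ)) ↔
      Sat M s (Form.imp ψ (.and (.nabla (.ann ψ φ)) (.nabla (.ann ψ (.neg φ)))))) := by
  constructor <;> simp only [Sat, Form.imp, sat, not_and, not_not, not_forall, not_exists, true_and] <;>
    constructor <;> intro h hψ
  · obtain ⟨h1, t, ht, hR, hnt⟩ := h hψ
    exact ⟨fun _ => h1, t, hR, ht, hnt⟩
  · obtain ⟨h1, t, hR, ht, hnt⟩ := h hψ
    exact ⟨h1 hψ, t, ht, hR, hnt⟩
  · obtain ⟨t, u, ht, hu, hRt, hRu, hφt, hφu⟩ := h hψ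
    exact ⟨⟨t, u, hRt, hRu, fun _ => hφt, hu, hφu⟩, u, t, hRu, hRt, fun _ => hφu, ht, hφt⟩
  · obtain ⟨⟨_, u, _, hRu, _, hu, hφu⟩, _, x, _, hRx, _, hx, hφx⟩ := h hψ
    exact ⟨x, u, hx, hu, hRx, hRu, hφx, hφu⟩
end

section
/- Moore sentences are self-refuting and their negations are successful: for every Kripke model M, every world s, and every propositional variable p, (1) M,s ⊨ [•p]¬•p, i.e. if M,s ⊨ •p then •p is false at s in the restricted model M|(•p); and (2) M,s ⊨ [¬•p]¬•p, i.e. if M,s ⊨ ¬•p then •p is false at s in the restricted model M|(¬•p). -/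
theorem stmt19 (W : Type) [Nonempty W] (M : Model W) (s : W) (n : Nat) :
    Sat M s (.ann (.bull (.atom n)) (.neg (.bull (.atom n)))) ∧
    Sat M s (.ann (.neg (.bull (.atom n))) (.neg (.bull (.atom n)))) := by
  constructor
  · intro hs ⟨hp, t, ⟨_, hbt⟩, hRt, hnp⟩
    exact hnp hbt.1
  · intro hs ⟨hp, t, ht, hRt, hnp⟩
    exact hs ⟨hp, t, trivial, hRt, hnp⟩
end
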